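/- arXiv:1206.4769 — 4 statements merged into one kernel-verified Lean document; each statement's English description precedes it below -/
import Mathlib

section
/- If P is a coherent probability assessment and E₁, E₂, E₁ ∪ E₂ all belong to 𝓔 with E₁ ∩ E₂ = ∅, then P(E₁ ∪ E₂) = P(E₁) + P(E₂). -/
/-! If P(E₁) + P(E₂) ≠ P(E₁ ∪ E₂) for disjoint E₁, E₂, betting with stakes s, s, -s on
E₁, E₂, E₁ ∪ E₂ has a gain that does not depend on the outcome, since
𝟙_{E₁ ∪ E₂} = 𝟙_{E₁} + 𝟙_{E₂}; for a suitable sign of s this sure gain is negative,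
which coherence forbids. -/

/-- De Finetti's coherence: no finite combination of bets has uniformly negative gain,
i.e. the sup over ω of the gain is nonnegative. -/
def Coherent {Ω : Type*} (𝓔 : Set (Set Ω)) (P : Set Ω → ℝ) : Prop :=
  ∀ (n : ℕ) (E : Fin n → Set Ω) (c : Fin n → ℝ),
    (∀ i, E i ∈ 𝓔) →
    ∀ ε > (0 : ℝ), ∃ ω : Ω,
      -ε ≤ ∑ i, c i * (P (E i) - Set.indicator (E i) (fun _ => (1 : ℝ)) ω)

namespace Coherent

variable {Ω : Type*} {𝓔 : Set (Set Ω)} {P : Set Ω → ℝ}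

theorem nonneg_of_gain_eq_const (hP : Coherent 𝓔 P) {n : ℕ} (E : Fin n → Set Ω)
    (c : Fin n → ℝ) (hE : ∀ i, E i ∈ 𝓔) {g : ℝ}
    (hg : ∀ ω, ∑ i, c i * (P (E i) - Set.indicator (E i) (fun _ => (1 : ℝ)) ω) = g) :
    0 ≤ g := by
  refine le_of_forall_pos_le_add fun ε hε => ?_
  obtain ⟨ω, hω⟩ := hP n E c hE ε hε
  linarith [hg ω]

theorem mul_add_sub_union_nonneg (hP : Coherent 𝓔 P) {E₁ E₂ : Set Ω}
    (h₁ : E₁ ∈ 𝓔) (h₂ : E₂ ∈ 𝓔) (h₁₂ : E₁ ∪ E₂ ∈ 𝓔) (hd : Disjoint E₁ E₂) (s : ℝ) :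
    0 ≤ s * (P E₁ + P E₂ - P (E₁ ∪ E₂)) := by
  refine hP.nonneg_of_gain_eq_const ![E₁, E₂, E₁ ∪ E₂] ![s, s, -s]
    (by simp [Fin.forall_fin_succ, h₁, h₂, h₁₂]) fun ω => ?_
  simp only [Fin.sum_univ_three, Matrix.cons_val_zero, Matrix.cons_val_one,
    Matrix.cons_val_two, Matrix.head_cons, Matrix.tail_cons,
    Set.indicator_union_of_disjoint hd]
  ring

end Coherent

theorem coherent_prob_additive_general {Ω : Type*}
    (𝓔 : Set (Set Ω)) (P : Set Ω → ℝ)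
    (hP : Coherent 𝓔 P) {E₁ E₂ : Set Ω}
    (h₁ : E₁ ∈ 𝓔) (h₂ : E₂ ∈ 𝓔) (h₁₂ : E₁ ∪ E₂ ∈ 𝓔)
    (hdisj : E₁ ∩ E₂ = ∅) :
    P (E₁ ∪ E₂) = P E₁ + P E₂ := by
  have hd : Disjoint E₁ E₂ := Set.disjoint_iff_inter_eq_empty.mpr hdisj
  have hpos := hP.mul_add_sub_union_nonneg h₁ h₂ h₁₂ hd 1
  have hneg := hP.mul_add_sub_union_nonneg h₁ h₂ h₁₂ hd (-1)
  linarith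

theorem coherent_prob_additive {Ω : Type*} [Nonempty Ω]
    (𝓔 : Set (Set Ω)) (P : Set Ω → ℝ)
    (hP : Coherent 𝓔 P) {E₁ E₂ : Set Ω}
    (h₁ : E₁ ∈ 𝓔) (h₂ : E₂ ∈ 𝓔) (h₁₂ : E₁ ∪ E₂ ∈ 𝓔)
    (hdisj : E₁ ∩ E₂ = ∅) :
    P (E₁ ∪ E₂) = P E₁ + P E₂ :=
  coherent_prob_additive_general 𝓔 P hP h₁ h₂ h₁₂ hdisj
end

section
/- If P : 𝓐 → ℝ is a function on an algebra of sets 𝓐 over Ω satisfying P(Ω) = 1, P(E) ≥ 0 for all E ∈ 𝓐, and P(E₁ ∪ E₂) = P(E₁) + P(E₂) whenever E₁, E₂ ∈ 𝓐 are disjoint, then P is coherent: for every finite family E₁,...,Eₙ ∈ 𝓐 and reals c₁,...,cₙ, the supremum over ω ∈ Ω of Σᵢ cᵢ (P(Eᵢ) − 𝟙_{Eᵢ}(ω)) is nonnegative. -/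
open Finset MeasureTheory

theorem Finset.exists_pos_and_nonneg_of_sum_mul_nonneg {ι : Type*} {s : Finset ι} {w g : ι → ℝ}
    (hw : ∀ i ∈ s, 0 ≤ w i) (hpos : 0 < ∑ i ∈ s, w i) (hwg : 0 ≤ ∑ i ∈ s, w i * g i) :
    ∃ i ∈ s, 0 < w i ∧ 0 ≤ g i := by
  by_contra! hneg
  obtain ⟨j, hj, hwj⟩ :=
    exists_lt_of_sum_lt (by simpa using hpos : ∑ i ∈ s, (0 : ℝ) < ∑ i ∈ s, w i)
  have : ∑ i ∈ s, w i * g i < ∑ i ∈ s, 0 := by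
    refine sum_lt_sum (fun i hi => ?_) ⟨j, hj, mul_neg_of_pos_of_neg hwj (hneg j hj hwj)⟩
    rcases (hw i hi).lt_or_eq with hwi | hwi
    · exact (mul_neg_of_pos_of_neg hwi (hneg i hi hwi)).le
    · simp [← hwi]
  simp only [sum_const_zero] at this
  linarith

section

variable {Ω : Type*} {𝓐 : Set (Set Ω)}

namespace MeasureTheory.IsSetAlgebra

theorem preimage_finset_mem (h𝓐 : IsSetAlgebra 𝓐) {β : Type*} {s : Ω → β}
    (hs : ∀ b, s ⁻¹' {b} ∈ 𝓐) (T : Finset β) : s ⁻¹' T ∈ 𝓐 := by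
  rw [← Set.biUnion_preimage_singleton]
  simpa using h𝓐.biUnion_mem T fun b _ => hs b

theorem preimage_setOf_mem_singleton_mem (h𝓐 : IsSetAlgebra 𝓐) {ι : Type*} [Fintype ι]
    {E : ι → Set Ω} (hE : ∀ i, E i ∈ 𝓐) (S : Set ι) :
    (fun ω => {i | ω ∈ E i}) ⁻¹' {S} ∈ 𝓐 := by
  have hfiber : (fun ω => {i | ω ∈ E i}) ⁻¹' {S} = ⋂ i ∈ univ, {ω | ω ∈ E i ↔ i ∈ S} := by
    ext ω
    simp [Set.ext_iff]
  rw [hfiber]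
  refine h𝓐.biInter_mem univ fun i _ => ?_
  by_cases hi : i ∈ S
  · simpa [hi] using hE i
  · simpa [hi, Set.compl_def] using h𝓐.compl_mem (hE i)

end MeasureTheory.IsSetAlgebra

def IsAdditiveOn (𝓐 : Set (Set Ω)) (P : Set Ω → ℝ) : Prop :=
  ∀ A ∈ 𝓐, ∀ B ∈ 𝓐, Disjoint A B → P (A ∪ B) = P A + P B

namespace IsAdditiveOn

variable {P : Set Ω → ℝ}

theorem apply_empty_eq_zero (hP : IsAdditiveOn 𝓐 P) (hempty : ∅ ∈ 𝓐) : P ∅ = 0 := by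
  simpa using hP ∅ hempty ∅ hempty (Set.disjoint_empty ∅)

theorem apply_preimage_finset_eq_sum (hP : IsAdditiveOn 𝓐 P) (h𝓐 : IsSetAlgebra 𝓐)
    {β : Type*} [DecidableEq β] {s : Ω → β} (hs : ∀ b, s ⁻¹' {b} ∈ 𝓐) (T : Finset β) :
    P (s ⁻¹' T) = ∑ b ∈ T, P (s ⁻¹' {b}) := by
  induction T using Finset.induction_on with
  | empty => simpa using hP.apply_empty_eq_zero h𝓐.empty_mem
  | insert a T ha ih =>
    have hdisj : Disjoint (s ⁻¹' {a}) (s ⁻¹' T) :=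
      (Set.disjoint_singleton_left.2 (mem_coe.not.2 ha)).preimage s
    rw [coe_insert, Set.insert_eq, Set.preimage_union,
      hP _ (hs a) _ (h𝓐.preimage_finset_mem hs T) hdisj, ih, sum_insert ha]

theorem sum_apply_fiber_eq_one (hP : IsAdditiveOn 𝓐 P) (h𝓐 : IsSetAlgebra 𝓐)
    (hPuniv : P Set.univ = 1) {β : Type*} [Fintype β] [DecidableEq β] {s : Ω → β}
    (hs : ∀ b, s ⁻¹' {b} ∈ 𝓐) :
    ∑ b, P (s ⁻¹' {b}) = 1 := by
  rw [← hP.apply_preimage_finset_eq_sum h𝓐 hs, coe_univ, Set.preimage_univ, hPuniv]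

theorem sum_fiber_mul_gain_eq_zero (hP : IsAdditiveOn 𝓐 P) (h𝓐 : IsSetAlgebra 𝓐)
    (hPuniv : P Set.univ = 1) {β ι : Type*} [Fintype β] [DecidableEq β] [Fintype ι]
    {s : Ω → β} (hs : ∀ b, s ⁻¹' {b} ∈ 𝓐) (T : ι → Finset β) (c : ι → ℝ) :
    ∑ b, P (s ⁻¹' {b}) * ∑ i, c i * (P (s ⁻¹' T i) - if b ∈ T i then 1 else 0) = 0 := by
  calc _ = ∑ i, c i * (P (s ⁻¹' T i) * ∑ b, P (s ⁻¹' {b}) - ∑ b ∈ T i, P (s ⁻¹' {b})) := by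
        simp only [mul_sum]
        rw [sum_comm]
        refine sum_congr rfl fun i _ => ?_
        simp only [mul_sub, mul_sum, sum_sub_distrib, mul_ite, mul_one, mul_zero, sum_ite_mem,
          univ_inter]
        congr 1 <;> exact sum_congr rfl fun _ _ => by ring
    _ = 0 := by
        simp [hP.sum_apply_fiber_eq_one h𝓐 hPuniv hs, ← hP.apply_preimage_finset_eq_sum h𝓐 hs]

end IsAdditiveOn

end

theorem fa_prob_on_algebra_coherent_general {Ω : Type*}
    (𝓐 : Set (Set Ω)) (P : Set Ω → ℝ)
    (huniv : Set.univ ∈ 𝓐)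
    (hcompl : ∀ A ∈ 𝓐, Aᶜ ∈ 𝓐)
    (hunion : ∀ A ∈ 𝓐, ∀ B ∈ 𝓐, A ∪ B ∈ 𝓐)
    (hPuniv : P Set.univ = 1)
    (hPnonneg : ∀ A ∈ 𝓐, 0 ≤ P A)
    (hPadd : ∀ A ∈ 𝓐, ∀ B ∈ 𝓐, Disjoint A B → P (A ∪ B) = P A + P B) :
    Coherent 𝓐 P := by
  classical
  intro n E c hE ε hε
  have h𝓐 : IsSetAlgebra 𝓐 :=
    ⟨by simpa using hcompl _ huniv, hcompl, fun A B hA hB ↦ hunion A hA B hB⟩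
  have hP : IsAdditiveOn 𝓐 P := hPadd
  set sig : Ω → Set (Fin n) := fun ω => {i | ω ∈ E i}
  have hfib : ∀ S, sig ⁻¹' {S} ∈ 𝓐 := h𝓐.preimage_setOf_mem_singleton_mem hE
  have hE_eq : ∀ i, E i = sig ⁻¹' (univ.filter (i ∈ ·) : Finset (Set (Fin n))) := by
    intro i; ext; simp [sig]
  obtain ⟨S, -, hS_pos, hS_gain⟩ := exists_pos_and_nonneg_of_sum_mul_nonneg
    (fun S _ => hPnonneg _ (hfib S))
    (by rw [hP.sum_apply_fiber_eq_one h𝓐 hPuniv hfib]; exact one_pos)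
    (hP.sum_fiber_mul_gain_eq_zero h𝓐 hPuniv hfib (fun i => univ.filter (i ∈ ·)) c).ge
  obtain ⟨ω, rfl⟩ : (sig ⁻¹' {S}).Nonempty := by
    refine Set.nonempty_iff_ne_empty.2 fun h => ?_
    rw [h, hP.apply_empty_eq_zero h𝓐.empty_mem] at hS_pos
    exact hS_pos.false
  refine ⟨ω, (neg_nonpos.2 hε.le).trans ?_⟩
  simp only [← hE_eq] at hS_gain
  simpa [Set.indicator, sig] using hS_gain

theorem fa_prob_on_algebra_coherent {Ω : Type*} [Nonempty Ω]
    (𝓐 : Set (Set Ω)) (P : Set Ω → ℝ)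
    (huniv : Set.univ ∈ 𝓐)
    (hcompl : ∀ A ∈ 𝓐, Aᶜ ∈ 𝓐)
    (hunion : ∀ A ∈ 𝓐, ∀ B ∈ 𝓐, A ∪ B ∈ 𝓐)
    (hPuniv : P Set.univ = 1)
    (hPnonneg : ∀ A ∈ 𝓐, 0 ≤ P A)
    (hPadd : ∀ A ∈ 𝓐, ∀ B ∈ 𝓐, Disjoint A B → P (A ∪ B) = P A + P B) :
    Coherent 𝓐 P :=
  fa_prob_on_algebra_coherent_general 𝓐 P huniv hcompl hunion hPuniv hPnonneg hPadd
end

section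
/- Let γ be a finitely additive probability on 𝒫(ℕ) vanishing on finite sets, and for each N let P_N be the uniform probability on S_N = {a₁,...,a_N} extended as an i.i.d. product to sequences; define P(C) = ∫ P_N(C) dγ(N). Then for the coordinate variables ξ₁, ξ₂, ..., one has P{ξᵢ = a_k} = 0 for every i and k, yet P(Ω) = 1; in particular the events {ξ₁ = a_k}, k ∈ ℕ, form a countable partition of the sure event each member of which has probability zero. -/
open Filter Topology

/-! Under `P_N` a fixed value `k` of a coordinate has mass `1 / N → 0`, while `Ω` has mass `1`
for every `N`; since a diffuse `γ` only sees limits in `N`, `P` gives mass `0` to each of the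
countably many events `{ξ₀ = k}` and mass `1` to their union. -/

theorem tendsto_uniform_mass_atTop (k : ℕ) :
    Tendsto (fun N : ℕ => if k < N then 1 / (N : ℝ) else 0) atTop (𝓝 0) := by
  refine tendsto_one_div_atTop_nhds_zero_nat.congr' ?_
  filter_upwards [eventually_gt_atTop k] with N hN
  rw [if_pos hN]

theorem mixture_kills_singletons_general
    (PN : ℕ → Set (ℕ → ℕ) → ℝ)
    (hPNtotal : ∀ N, PN N Set.univ = 1)
    -- each coordinate is uniform on `{0,...,N-1}` under `P_N`
    (hunif : ∀ N, 1 ≤ N → ∀ i k : ℕ,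
      PN N {ω | ω i = k} = if k < N then 1 / (N : ℝ) else 0)
    (P : Set (ℕ → ℕ) → ℝ)
    -- `P = ∫ P_N dγ(N)` with `γ` diffuse: whenever `P_N(C)` converges, the
    -- integral equals the limit
    (hmix : ∀ (C : Set (ℕ → ℕ)) (L : ℝ),
      Tendsto (fun N => PN N C) atTop (nhds L) → P C = L) :
    (∀ i k : ℕ, P {ω | ω i = k} = 0) ∧
    P Set.univ = 1 ∧
    (⋃ k : ℕ, {ω : ℕ → ℕ | ω 0 = k}) = Set.univ ∧
    Pairwise (Function.onFun Disjoint fun k : ℕ => {ω : ℕ → ℕ | ω 0 = k}) := by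
  refine ⟨fun i k => hmix _ _ ?_, hmix _ _ ?_, ?_, ?_⟩
  · refine (tendsto_uniform_mass_atTop k).congr' ?_
    filter_upwards [eventually_ge_atTop 1] with N hN
    exact (hunif N hN i k).symm
  · simpa only [hPNtotal] using tendsto_const_nhds
  · exact Set.iUnion_eq_univ_iff.2 fun ω => ⟨ω 0, rfl⟩
  · exact pairwise_disjoint_fiber fun ω : ℕ → ℕ => ω 0

/-- Mixing the i.i.d. uniform-on-`{0,...,N-1}` laws `P_N` on `Ω = ℕ → ℕ` against a
diffuse finitely additive `γ` on `ℕ` yields a finitely additive probability `P` with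
`P{ξᵢ = k} = 0` for all `i, k`, although the events `{ξ₀ = k}` partition the sure event. -/
theorem mixture_kills_singletons
    (PN : ℕ → Set (ℕ → ℕ) → ℝ)
    (hPNnonneg : ∀ N A, 0 ≤ PN N A)
    (hPNtotal : ∀ N, PN N Set.univ = 1)
    (hPNadd : ∀ N, ∀ A B : Set (ℕ → ℕ), Disjoint A B →
      PN N (A ∪ B) = PN N A + PN N B)
    -- each coordinate is uniform on `{0,...,N-1}` under `P_N`
    (hunif : ∀ N, 1 ≤ N → ∀ i k : ℕ,
      PN N {ω | ω i = k} = if k < N then 1 / (N : ℝ) else 0)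
    (P : Set (ℕ → ℕ) → ℝ)
    (hPnonneg : ∀ A, 0 ≤ P A)
    (hPadd : ∀ A B : Set (ℕ → ℕ), Disjoint A B → P (A ∪ B) = P A + P B)
    -- `P = ∫ P_N dγ(N)` with `γ` diffuse: whenever `P_N(C)` converges, the
    -- integral equals the limit
    (hmix : ∀ (C : Set (ℕ → ℕ)) (L : ℝ),
      Tendsto (fun N => PN N C) atTop (nhds L) → P C = L) :
    (∀ i k : ℕ, P {ω | ω i = k} = 0) ∧
    P Set.univ = 1 ∧
    (⋃ k : ℕ, {ω : ℕ → ℕ | ω 0 = k}) = Set.univ ∧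
    Pairwise (Function.onFun Disjoint fun k : ℕ => {ω : ℕ → ℕ | ω 0 = k}) :=
  mixture_kills_singletons_general PN hPNtotal hunif P hmix
end

section
/- There exists a finitely additive probability Q on 𝒫({0,1}^ℕ) under which the coordinate process (pₙ) is a Bernoulli(p) sequence — i.e., Q{p₁=e₁,...,p_N=e_N} = p^{Σeᵢ}(1−p)^{N−Σeᵢ} for all N and all (e₁,...,e_N) ∈ {0,1}^N — and yet Q assigns probability 1 to the set Ω₁ of sequences that are eventually 0, so the empirical frequencies fₙ = (1/n)Σ_{j≤n} pⱼ converge to 0 (not to p) on a set of Q-probability 1. -/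
open Filter Topology MeasureTheory ProbabilityTheory unitInterval

/-!
Let `Qₙ` be the law of a Bernoulli(`p`) sequence whose coordinates from `n` on are reset to `0`.
Every `Qₙ` is carried by the eventually-zero sequences, and gives each cylinder of length
`N ≤ n` its Bernoulli value. The limit of `Qₙ` along a nonprincipal ultrafilter on `ℕ` is still a
finitely additive probability and inherits both properties, since each holds for all large `n`;
only countable additivity, on which the strong law of large numbers rests, is lost.
-/

structure IsFinitelyAdditiveProbability {α : Type*} (Q : Set α → ℝ) : Prop where
  nonneg : ∀ A, 0 ≤ Q A
  univ_eq_one : Q Set.univ = 1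
  union_eq : ∀ A B, Disjoint A B → Q (A ∪ B) = Q A + Q B

namespace IsFinitelyAdditiveProbability

variable {α ι : Type*} {Q : Set α → ℝ}

lemma le_one (hQ : IsFinitelyAdditiveProbability Q) (A : Set α) : Q A ≤ 1 := by
  have h := hQ.union_eq A Aᶜ disjoint_compl_right
  rw [Set.union_compl_self, hQ.univ_eq_one] at h
  linarith [hQ.nonneg Aᶜ]

lemma of_measureReal_preimage {X : Type*} [MeasurableSpace X] [DiscreteMeasurableSpace X]
    (ν : Measure X) [IsProbabilityMeasure ν] (g : X → α) :
    IsFinitelyAdditiveProbability fun A => ν.real (g ⁻¹' A) where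
  nonneg _ := measureReal_nonneg
  univ_eq_one := by simp
  union_eq A B h := by
    rw [Set.preimage_union, measureReal_union (h.preimage g) .of_discrete]

variable {μ : ι → Set α → ℝ}

lemma tendsto_limUnder (hμ : ∀ i, IsFinitelyAdditiveProbability (μ i)) (U : Ultrafilter ι)
    (A : Set α) :
    Tendsto (fun i => μ i A) U (𝓝 (limUnder U fun i => μ i A)) := by
  have hIcc : ↑(U.map fun i => μ i A) ≤ 𝓟 (Set.Icc (0 : ℝ) 1) :=
    le_principal_iff.2 <| mem_map.2 <| univ_mem' fun i => ⟨(hμ i).nonneg A, (hμ i).le_one A⟩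
  obtain ⟨x, -, hx⟩ := isCompact_Icc.ultrafilter_le_nhds _ hIcc
  exact tendsto_nhds_limUnder ⟨x, hx⟩

lemma limUnder_ultrafilter (hμ : ∀ i, IsFinitelyAdditiveProbability (μ i))
    (U : Ultrafilter ι) :
    IsFinitelyAdditiveProbability fun A => limUnder (U : Filter ι) fun i => μ i A where
  nonneg A := ge_of_tendsto' (tendsto_limUnder hμ U A) fun i => (hμ i).nonneg A
  univ_eq_one := (tendsto_const_nhds.congr fun i => ((hμ i).univ_eq_one).symm).limUnder_eq
  union_eq A B h := ((tendsto_limUnder hμ U A).add (tendsto_limUnder hμ U B)).congr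
    (fun i => ((hμ i).union_eq A B h).symm) |>.limUnder_eq

end IsFinitelyAdditiveProbability

lemma Fintype.prod_ite_eq_pow_mul_pow {ι M : Type*} [Fintype ι] [CommMonoid M] (q : ι → Prop)
    [DecidablePred q] (a b : M) :
    ∏ i, (if q i then a else b)
      = a ^ (Finset.univ.filter q).card * b ^ (Fintype.card ι - (Finset.univ.filter q).card) := by
  have hcard := Finset.card_filter_add_card_filter_not (s := Finset.univ) q
  rw [Finset.card_univ] at hcard
  rw [Finset.prod_ite, Finset.prod_const, Finset.prod_const]
  congr 2
  omega

def zeroExtend {n : ℕ} (b : Fin n → Bool) (j : ℕ) : Bool :=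
  if h : j < n then b ⟨j, h⟩ else false

lemma eventually_zeroExtend_eq_false {n : ℕ} (b : Fin n → Bool) :
    ∀ᶠ j in atTop, zeroExtend b j = false :=
  eventually_atTop.2 ⟨n, fun j hj => by simp [zeroExtend, Nat.not_lt.2 hj]⟩

lemma zeroExtend_castAdd {N k : ℕ} (b : Fin (N + k) → Bool) (i : Fin N) :
    zeroExtend b i = b (Fin.castAdd k i) := by
  simp [zeroExtend, Fin.castAdd, Fin.castLE, Nat.lt_add_right k i.isLt]

noncomputable def truncatedBernoulli (p : I) (n : ℕ) (A : Set (ℕ → Bool)) : ℝ :=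
  (Measure.pi fun _ : Fin n => Ber(true, false, p)).real (zeroExtend ⁻¹' A)

lemma isFinitelyAdditiveProbability_truncatedBernoulli (p : I) (n : ℕ) :
    IsFinitelyAdditiveProbability (truncatedBernoulli p n) :=
  .of_measureReal_preimage _ _

lemma truncatedBernoulli_eventually_false (p : I) (n : ℕ) :
    truncatedBernoulli p n {d | ∀ᶠ j in atTop, d j = false} = 1 := by
  have h : zeroExtend (n := n) ⁻¹' {d | ∀ᶠ j in atTop, d j = false} = Set.univ :=
    Set.eq_univ_of_forall eventually_zeroExtend_eq_false
  rw [truncatedBernoulli, h, probReal_univ]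

lemma truncatedBernoulli_cylinder (p : I) {N n : ℕ} (hN : N ≤ n) (e : Fin N → Bool) :
    truncatedBernoulli p n {d | ∀ i : Fin N, d i = e i}
      = ∏ i, if e i then (p : ℝ) else 1 - p := by
  obtain ⟨k, rfl⟩ := Nat.exists_eq_add_of_le hN
  have hpre : zeroExtend ⁻¹' {d | ∀ i : Fin N, d i = e i}
      = Set.univ.pi (Fin.append (fun i => {e i}) fun _ : Fin k => Set.univ) := by
    ext b
    simp [Set.mem_pi, Fin.forall_fin_add, zeroExtend_castAdd]
  rw [truncatedBernoulli, hpre, measureReal_def, Measure.pi_pi, ENNReal.toReal_prod,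
    Fin.prod_univ_add]
  simp only [Fin.append_left, Fin.append_right, measure_univ, ENNReal.toReal_one,
    Finset.prod_const_one, mul_one]
  refine Finset.prod_congr rfl fun i _ => ?_
  cases e i <;> simp

theorem bernoulli_fa_law_with_frequencies_to_zero (p : ℝ) (hp0 : 0 < p) (hp1 : p < 1) :
    ∃ Q : Set (ℕ → Bool) → ℝ,
      (∀ A, 0 ≤ Q A) ∧
      Q Set.univ = 1 ∧
      (∀ A B : Set (ℕ → Bool), Disjoint A B → Q (A ∪ B) = Q A + Q B) ∧
      -- Bernoulli(p) finite-dimensional distributions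
      (∀ (N : ℕ) (e : Fin N → Bool),
        Q {d | ∀ i : Fin N, d i = e i}
          = p ^ (Finset.univ.filter fun i : Fin N => e i = true).card
            * (1 - p) ^ (N - (Finset.univ.filter fun i : Fin N => e i = true).card)) ∧
      -- yet the set of eventually-0 sequences has probability one
      Q {d | ∀ᶠ j in atTop, d j = false} = 1 ∧
      -- and on that set the empirical frequencies converge to 0, not to p
      (∀ d : ℕ → Bool, (∀ᶠ j in atTop, d j = false) →
        Tendsto
          (fun n => (∑ j ∈ Finset.range n, if d j = true then (1 : ℝ) else 0) / n)
          atTop (nhds 0)) := by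
  set q : I := ⟨p, hp0.le, hp1.le⟩
  have hQ := IsFinitelyAdditiveProbability.limUnder_ultrafilter
    (isFinitelyAdditiveProbability_truncatedBernoulli q) (hyperfilter ℕ)
  have hle_atTop : (hyperfilter ℕ : Filter ℕ) ≤ atTop :=
    Nat.cofinite_eq_atTop ▸ hyperfilter_le_cofinite
  refine ⟨_, hQ.nonneg, hQ.univ_eq_one, hQ.union_eq, fun N e => ?_, ?_, fun d hd => ?_⟩
  · have hprod := Fintype.prod_ite_eq_pow_mul_pow (fun i => e i = true) p (1 - p)
    rw [Fintype.card_fin] at hprod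
    rw [← hprod]
    refine (tendsto_const_nhds.congr' ?_).limUnder_eq
    filter_upwards [hle_atTop (eventually_ge_atTop N)] with n hn
    exact (truncatedBernoulli_cylinder q hn e).symm
  · simp only [truncatedBernoulli_eventually_false]
    exact tendsto_const_nhds.limUnder_eq
  · have hzero : Tendsto (fun j => if d j = true then (1 : ℝ) else 0) atTop (𝓝 0) :=
      tendsto_const_nhds.congr' (hd.mono fun j hj => by simp [hj])
    simpa only [div_eq_inv_mul] using hzero.cesaro
end
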